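/- arXiv:math/9909058 — 5 statements merged into one kernel-verified Lean document; each statement's English description precedes it below -/
import Mathlib

section
/- For every u in the two-sided ideal I of the tensor product bialgebra C = A ⊗_K B generated by {ι(x) ⊗ 1 − 1 ⊗ π(x) : x ∈ O}, the comultiplication satisfies Δ_C(u) ∈ I ⊗ C + C ⊗ I, where I ⊗ C and C ⊗ I denote the images of the natural maps I ⊗_K C → C ⊗_K C and C ⊗_K I → C ⊗_K C, viewed as K-submodules of C ⊗_K C. -/
/-!
Let `q : C → C ⧸ I` be the quotient map. The algebra map `(q ⊗ q) ∘ Δ` kills every generator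
`ι x ⊗ 1 - 1 ⊗ π x`: both `a ↦ a ⊗ 1` and `b ↦ 1 ⊗ b` are bialgebra maps, so
`(q ⊗ q) (Δ (ι x ⊗ 1))` and `(q ⊗ q) (Δ (1 ⊗ π x))` are obtained from `Δ x` by applying
`q (ι · ⊗ 1)` and `q (1 ⊗ π ·)` to both factors, and these two maps agree. Hence `(q ⊗ q) ∘ Δ`
kills `I`, and by right exactness of the tensor product the kernel of `q ⊗ q` is
`I ⊗ C + C ⊗ I`.
-/

open TensorProduct

universe u

section
variable {R C D : Type*} [CommRing R] [Ring C] [Algebra R C] [Ring D] [Algebra R D]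

theorem Ideal.Quotient.exact_subtype_mkₐ (I : Ideal C) [I.IsTwoSided] :
    Function.Exact (I.restrictScalars R).subtype (Ideal.Quotient.mkₐ R I) := by
  intro x
  simp [Ideal.Quotient.eq_zero_iff_mem]

theorem Ideal.Quotient.ker_tensorProductMap_mkₐ (I : Ideal C) [I.IsTwoSided]
    (J : Ideal D) [J.IsTwoSided] :
    LinearMap.ker (TensorProduct.map (mkₐ R I).toLinearMap (mkₐ R J).toLinearMap) =
      LinearMap.range (TensorProduct.map (I.restrictScalars R).subtype LinearMap.id) ⊔
        LinearMap.range (TensorProduct.map LinearMap.id (J.restrictScalars R).subtype) :=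
  (TensorProduct.map_ker (exact_subtype_mkₐ I) (mkₐ_surjective R I)
    (exact_subtype_mkₐ J) (mkₐ_surjective R J)).trans (sup_comm _ _)

end

namespace Bialgebra.TensorProduct

variable {R A B : Type*} [CommSemiring R] [Semiring A] [Semiring B] [Bialgebra R A]
  [Bialgebra R B]

variable (B) in
noncomputable def includeLeft : A →ₐc[R] A ⊗[R] B :=
  BialgHom.ofAlgHom Algebra.TensorProduct.includeLeft (by ext; simp) (by
    ext a
    simp [← (Coalgebra.Repr.arbitrary R a).eq, TensorProduct.sum_tmul,
      Algebra.TensorProduct.one_def])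

variable (A) in
noncomputable def includeRight : B →ₐc[R] A ⊗[R] B :=
  BialgHom.ofAlgHom Algebra.TensorProduct.includeRight (by ext; simp) (by
    ext b
    simp [← (Coalgebra.Repr.arbitrary R b).eq, TensorProduct.tmul_sum,
      Algebra.TensorProduct.one_def])

end Bialgebra.TensorProduct

theorem TwoSidedIdeal.comul_mem_of_mem_span {R C : Type*} [CommRing R] [Ring C] [Bialgebra R C]
    {s : Set C}
    (hs : ∀ x ∈ s, Coalgebra.comul (R := R) x ∈
      LinearMap.range
          (TensorProduct.map ((span s).asIdeal.restrictScalars R).subtype LinearMap.id) ⊔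
        LinearMap.range
          (TensorProduct.map LinearMap.id ((span s).asIdeal.restrictScalars R).subtype))
    {u : C} (hu : u ∈ span s) :
    Coalgebra.comul (R := R) u ∈
      LinearMap.range
          (TensorProduct.map ((span s).asIdeal.restrictScalars R).subtype LinearMap.id) ⊔
        LinearMap.range
          (TensorProduct.map LinearMap.id ((span s).asIdeal.restrictScalars R).subtype) := by
  set q := Ideal.Quotient.mkₐ R (span s).asIdeal
  rw [← Ideal.Quotient.ker_tensorProductMap_mkₐ] at hs ⊢
  let Φ := (Algebra.TensorProduct.map q q).comp (Bialgebra.comulAlgHom R C)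
  exact (mem_ker Φ).1 ((span_le (I := ker Φ)).2 (fun x hx ↦ (mem_ker Φ).2 (hs x hx)) hu)

theorem stmt_2_general {K A B O : Type u} [Field K]
    [Ring A] [Ring B] [Ring O]
    [Bialgebra K A] [Bialgebra K B] [Bialgebra K O]
    (ι : O →ₐc[K] A) (π : O →ₐc[K] B)
    (I : TwoSidedIdeal (A ⊗[K] B))
    (hI : I = TwoSidedIdeal.span
      {c : A ⊗[K] B | ∃ x : O, c = ι x ⊗ₜ[K] (1 : B) - (1 : A) ⊗ₜ[K] π x})
    (u : A ⊗[K] B) (hu : u ∈ I) :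
    Coalgebra.comul (R := K) u ∈
      LinearMap.range (TensorProduct.map
          ((Submodule.restrictScalars K (TwoSidedIdeal.asIdeal I)).subtype)
          (LinearMap.id : (A ⊗[K] B) →ₗ[K] (A ⊗[K] B)))
      + LinearMap.range (TensorProduct.map
          (LinearMap.id : (A ⊗[K] B) →ₗ[K] (A ⊗[K] B))
          ((Submodule.restrictScalars K (TwoSidedIdeal.asIdeal I)).subtype)) := by
  subst hI
  set S : Set (A ⊗[K] B) := {c | ∃ x : O, c = ι x ⊗ₜ[K] (1 : B) - (1 : A) ⊗ₜ[K] π x}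
  rw [Submodule.add_eq_sup]
  refine TwoSidedIdeal.comul_mem_of_mem_span ?_ hu
  rintro _ ⟨x, rfl⟩
  set q := (Ideal.Quotient.mkₐ K (TwoSidedIdeal.span S).asIdeal).toLinearMap
  set gL := (Bialgebra.TensorProduct.includeLeft B).comp ι
  set gR := (Bialgebra.TensorProduct.includeRight A).comp π
  have hq : q ∘ₗ gL.toLinearMap = q ∘ₗ gR.toLinearMap := by
    ext y
    exact (Ideal.Quotient.mk_eq_mk_iff_sub_mem _ _).2 (TwoSidedIdeal.subset_span ⟨y, rfl⟩)
  have map_comul_apply (g : O →ₐc[K] A ⊗[K] B) (y : O) :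
      map q q (Coalgebra.comul (g y)) =
        map (q ∘ₗ g.toLinearMap) (q ∘ₗ g.toLinearMap) (Coalgebra.comul y) := by
    rw [← CoalgHomClass.map_comp_comul_apply, ← LinearMap.comp_apply, ← map_comp]
    rfl
  rw [← Ideal.Quotient.ker_tensorProductMap_mkₐ, LinearMap.mem_ker, map_sub, map_sub, sub_eq_zero]
  change map q q (Coalgebra.comul (gL x)) = map q q (Coalgebra.comul (gR x))
  rw [map_comul_apply, map_comul_apply, hq]

/-- Let `K` be a field, `A`, `B`, `O` bialgebras over `K`,
`ι : O → A` and `π : O → B` bialgebra homomorphisms with the image of `ι`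
contained in the center of `A`, and let `I` be the two-sided ideal of the tensor
product bialgebra `C = A ⊗[K] B` generated by `{ι x ⊗ 1 - 1 ⊗ π x : x ∈ O}`.
Then for every `u ∈ I` the comultiplication satisfies
`Δ_C u ∈ I ⊗ C + C ⊗ I`, where `I ⊗ C` and `C ⊗ I` are the images of the
natural maps `I ⊗[K] C → C ⊗[K] C` and `C ⊗[K] I → C ⊗[K] C` viewed as
`K`-submodules of `C ⊗[K] C`. -/
theorem stmt_2 {K A B O : Type u} [Field K]
    [Ring A] [Ring B] [Ring O]
    [Bialgebra K A] [Bialgebra K B] [Bialgebra K O]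
    (ι : O →ₐc[K] A) (π : O →ₐc[K] B)
    (hcentral : ∀ x : O, ι x ∈ Set.center A)
    (I : TwoSidedIdeal (A ⊗[K] B))
    (hI : I = TwoSidedIdeal.span
      {c : A ⊗[K] B | ∃ x : O, c = ι x ⊗ₜ[K] (1 : B) - (1 : A) ⊗ₜ[K] π x})
    (u : A ⊗[K] B) (hu : u ∈ I) :
    Coalgebra.comul (R := K) u ∈
      LinearMap.range (TensorProduct.map
          ((Submodule.restrictScalars K (TwoSidedIdeal.asIdeal I)).subtype)
          (LinearMap.id : (A ⊗[K] B) →ₗ[K] (A ⊗[K] B)))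
      + LinearMap.range (TensorProduct.map
          (LinearMap.id : (A ⊗[K] B) →ₗ[K] (A ⊗[K] B))
          ((Submodule.restrictScalars K (TwoSidedIdeal.asIdeal I)).subtype)) :=
  stmt_2_general ι π I hI u hu
end

section
/- The Nielsen elements form a complete system of orthogonal idempotents in R = K[X]/(X^p − X): for all η, μ ∈ ZMod p one has e_η · e_μ = 0 whenever η ≠ μ, e_η · e_η = e_η, and Σ_{η ∈ ZMod p} e_η = 1 in R. -/
/-
Evaluation at the points of the prime field is an injective ring homomorphism
`K[X]/(X^p - X) → (ZMod p → K)`, because `X^p - X = ∏ₐ (X - a)` and distinct linear factors are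
coprime. It sends `e_η` to the indicator function of `η`: for `η = 0` this is Fermat's little
theorem, and for `η ≠ 0` the value at `a` is `-∑_{n=1}^{p-1} tⁿ = 1 - ∑_{n<p} tⁿ` with `t = a/η`,
and the geometric sum `∑_{n<p} tⁿ = (tᵖ - 1)/(t - 1)` equals `1` unless `t = 1`, when it is `p = 0`.
Indicator functions of points form a complete system of orthogonal idempotents.
-/

open Polynomial

/-- The Nielsen element `e_η` in `K[X]/(X^p - X)`, for `η ∈ ZMod p`:
the image of `-∑_{n=1}^{p-1} η̄^{-n} X^n` if `η ≠ 0`, and of `1 - X^(p-1)` if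
`η = 0`, where `η̄` denotes the image of `η` in `K`. -/
noncomputable def nielsen (K : Type*) [Field K] (p : ℕ) [NeZero p] [CharP K p]
    (η : ZMod p) : Polynomial K ⧸ Ideal.span {(X : Polynomial K) ^ p - X} :=
  Ideal.Quotient.mk _ <|
    if η = 0 then 1 - X ^ (p - 1)
    else -∑ n ∈ Finset.Icc 1 (p - 1),
      C ((ZMod.castHom (dvd_refl p) K η) ^ n)⁻¹ * X ^ n

open Finset

namespace ZMod

variable {p : ℕ} [Fact p.Prime]

theorem geom_sum_card (t : ZMod p) :
    ∑ n ∈ range p, t ^ n = if t = 1 then 0 else 1 := by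
  split_ifs with ht
  · simp [ht]
  · rw [geom_sum_eq ht, pow_card, div_self (sub_ne_zero.mpr ht)]

theorem neg_sum_Icc_pow (t : ZMod p) :
    -∑ n ∈ Icc 1 (p - 1), t ^ n = if t = 1 then 1 else 0 := by
  have hp := (Fact.out : p.Prime).pos
  have hIcc : Icc 1 (p - 1) = Ico 1 p := by ext; simp; omega
  have := geom_sum_card t
  rw [range_eq_Ico, sum_eq_sum_Ico_succ_bot hp, ← hIcc, pow_zero] at this
  split_ifs at this ⊢ <;> linear_combination -this

theorem one_sub_pow_card_sub_one (a : ZMod p) :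
    1 - a ^ (p - 1) = if a = 0 then 1 else 0 := by
  split_ifs with ha
  · simp [ha, Nat.sub_ne_zero_of_lt (Fact.out : p.Prime).one_lt]
  · rw [pow_card_sub_one_eq_one ha, sub_self]

end ZMod

theorem Polynomial.prod_X_sub_C_dvd_of_eval_eq_zero {ι K : Type*} [Fintype ι] [Field K]
    {f : ι → K} (hf : Function.Injective f) {g : K[X]} (hg : ∀ i, g.eval (f i) = 0) :
    ∏ i, (X - C (f i)) ∣ g :=
  Fintype.prod_dvd_of_coprime (pairwise_coprime_X_sub_C hf) fun i => dvd_iff_isRoot.mpr (hg i)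

section PrimeField

variable (K : Type*) [Field K] (p : ℕ) [Fact p.Prime] [CharP K p]

theorem eval_castHom_X_pow_sub_X (a : ZMod p) :
    ((X : K[X]) ^ p - X).eval (ZMod.castHom (dvd_refl p) K a) = 0 := by
  rw [eval_sub, eval_pow, eval_X, ← map_pow, ZMod.pow_card, sub_self]

theorem prod_X_sub_C_castHom_eq_X_pow_sub_X :
    ∏ a : ZMod p, (X - C (ZMod.castHom (dvd_refl p) K a)) = X ^ p - X := by
  have hp := (Fact.out : p.Prime).one_lt
  have hdvd := prod_X_sub_C_dvd_of_eval_eq_zero (ZMod.castHom (dvd_refl p) K).injective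
    (eval_castHom_X_pow_sub_X K p)
  refine (eq_of_monic_of_dvd_of_natDegree_le (monic_prod_X_sub_C _ _)
    (monic_X_pow_sub (by rw [degree_X]; exact_mod_cast hp)) hdvd ?_).symm
  rw [FiniteField.X_pow_card_sub_X_natDegree_eq K hp, natDegree_finsetProd_X_sub_C_eq_card,
    card_univ, ZMod.card]

theorem X_pow_sub_X_dvd_iff {g : K[X]} :
    X ^ p - X ∣ g ↔ ∀ a : ZMod p, g.eval (ZMod.castHom (dvd_refl p) K a) = 0 := by
  refine ⟨fun h a => ?_, fun h => ?_⟩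
  · obtain ⟨q, rfl⟩ := h
    rw [eval_mul, eval_castHom_X_pow_sub_X, zero_mul]
  · rw [← prod_X_sub_C_castHom_eq_X_pow_sub_X]
    exact prod_X_sub_C_dvd_of_eval_eq_zero (ZMod.castHom _ K).injective h

noncomputable def evalPrimeField :
    K[X] ⧸ Ideal.span {(X : K[X]) ^ p - X} →+* (ZMod p → K) :=
  Ideal.Quotient.lift _ (RingHom.pi fun a => evalRingHom (ZMod.castHom (dvd_refl p) K a))
    fun _ hg => funext ((X_pow_sub_X_dvd_iff K p).mp (Ideal.mem_span_singleton.mp hg))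

theorem evalPrimeField_mk (g : K[X]) (a : ZMod p) :
    evalPrimeField K p (Ideal.Quotient.mk _ g) a = g.eval (ZMod.castHom (dvd_refl p) K a) :=
  rfl

theorem evalPrimeField_injective : Function.Injective (evalPrimeField K p) := by
  refine (injective_iff_map_eq_zero _).mpr fun x hx => ?_
  obtain ⟨g, rfl⟩ := Ideal.Quotient.mk_surjective x
  rw [Ideal.Quotient.eq_zero_iff_mem, Ideal.mem_span_singleton, X_pow_sub_X_dvd_iff]
  exact fun a => congrFun hx a

end PrimeField

noncomputable def nielsenPoly (p : ℕ) (η : ZMod p) : (ZMod p)[X] :=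
  if η = 0 then 1 - X ^ (p - 1) else -∑ n ∈ Icc 1 (p - 1), C (η ^ n)⁻¹ * X ^ n

section Nielsen

variable {p : ℕ} [Fact p.Prime]

theorem eval_nielsenPoly (η a : ZMod p) :
    (nielsenPoly p η).eval a = if a = η then 1 else 0 := by
  by_cases hη : η = 0
  · rw [nielsenPoly, if_pos hη, hη, eval_sub, eval_one, eval_pow, eval_X,
      ZMod.one_sub_pow_card_sub_one]
  · have hterm (n : ℕ) : (η ^ n)⁻¹ * a ^ n = (a / η) ^ n := by rw [div_pow, inv_mul_eq_div]
    simp only [nielsenPoly, if_neg hη, eval_neg, eval_finsetSum, eval_mul, eval_C, eval_pow,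
      eval_X, hterm, ZMod.neg_sum_Icc_pow, div_eq_one_iff_eq hη]

variable (K : Type*) [Field K] [CharP K p]

theorem nielsen_eq_mk_map_nielsenPoly (η : ZMod p) :
    nielsen K p η = Ideal.Quotient.mk _ ((nielsenPoly p η).map (ZMod.castHom (dvd_refl p) K)) := by
  unfold nielsen nielsenPoly
  split_ifs <;> simp [Polynomial.map_sum]

theorem evalPrimeField_nielsen (η : ZMod p) :
    evalPrimeField K p (nielsen K p η) = Pi.single η 1 := by
  funext a
  rw [nielsen_eq_mk_map_nielsenPoly, evalPrimeField_mk, eval_map_apply, eval_nielsenPoly,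
    Pi.single_apply]
  split_ifs <;> simp

theorem completeOrthogonalIdempotents_nielsen :
    CompleteOrthogonalIdempotents (nielsen K p) := by
  rw [← CompleteOrthogonalIdempotents.map_injective_iff _ (evalPrimeField_injective K p)]
  convert CompleteOrthogonalIdempotents.single fun _ : ZMod p => K
  exact evalPrimeField_nielsen K _

end Nielsen

/-- The Nielsen elements form a complete system of orthogonal
idempotents in `R = K[X]/(X^p - X)`: for all `η μ : ZMod p`, `e_η * e_μ = 0`
whenever `η ≠ μ`, `e_η * e_η = e_η`, and `∑_η e_η = 1` in `R`. -/
theorem stmt_3 (K : Type*) [Field K] (p : ℕ) [NeZero p] [CharP K p] :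
    (∀ η μ : ZMod p, η ≠ μ → nielsen K p η * nielsen K p μ = 0) ∧
    (∀ η : ZMod p, nielsen K p η * nielsen K p η = nielsen K p η) ∧
    (∑ η : ZMod p, nielsen K p η) = 1 := by
  have := CharP.char_is_prime_of_pos K p
  have h := completeOrthogonalIdempotents_nielsen K (p := p)
  exact ⟨fun η μ hne => h.ortho hne, fun η => h.idem η, h.complete⟩
end

section
/- Suppose that ad_L(P(a)) = (ad_L a)^p as K-linear endomorphisms of L, for all a ∈ L. Then in the central extension L_χ one has ad_{L_χ}(Q(v)) = (ad_{L_χ}(v))^p as K-linear endomorphisms of L_χ, for every v ∈ L_χ. -/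
/-- The bracket on the central extension `L_χ = L × K`:
`⁅(a,α),(b,β)⁆ = (⁅a,b⁆, 0)`, so that `c = (0,1)` is central. -/
instance centralExtLieRing (K L : Type*) [CommRing K] [LieRing L] :
    LieRing (L × K) :=
  { (inferInstance : AddCommGroup (L × K)) with
    bracket := fun x y => (⁅x.1, y.1⁆, 0)
    add_lie := fun x y z => by
      show (⁅x.1 + y.1, z.1⁆, (0 : K)) = (⁅x.1, z.1⁆, (0 : K)) + (⁅y.1, z.1⁆, (0 : K))
      rw [add_lie, Prod.mk_add_mk, add_zero]
    lie_add := fun x y z => by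
      show (⁅x.1, y.1 + z.1⁆, (0 : K)) = (⁅x.1, y.1⁆, (0 : K)) + (⁅x.1, z.1⁆, (0 : K))
      rw [lie_add, Prod.mk_add_mk, add_zero]
    lie_self := fun x => by
      show (⁅x.1, x.1⁆, (0 : K)) = (0, 0)
      rw [lie_self]
    leibniz_lie := fun x y z => by
      show (⁅x.1, ⁅y.1, z.1⁆⁆, (0 : K)) =
        (⁅⁅x.1, y.1⁆, z.1⁆, (0 : K)) + (⁅y.1, ⁅x.1, z.1⁆⁆, (0 : K))
      rw [leibniz_lie, Prod.mk_add_mk, add_zero] }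

/-- The central extension `L_χ = L × K` is a Lie algebra over `K`. -/
instance centralExtLieAlgebra (K L : Type*) [CommRing K] [LieRing L]
    [LieAlgebra K L] : LieAlgebra K (L × K) where
  lie_smul t x y := by
    ext
    · exact LieAlgebra.lie_smul t x.1 y.1
    · exact (smul_zero t).symm

/-- If `ad_L (P a) = (ad_L a)^p` for all `a ∈ L`, then in the
central extension `L_χ = L × K` (with bracket `⁅(a,α),(b,β)⁆ = (⁅a,b⁆,0)` and
twisted `p`-operation `Q (a,α) = (P a, χ(a)^p + α^p)`) one has
`ad_{L_χ} (Q v) = (ad_{L_χ} v)^p` for every `v`. -/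
theorem stmt_8 {K L : Type*} (p : ℕ) [Field K] [CharP K p] [NeZero p]
    [LieRing L] [LieAlgebra K L] (P : L → L) (χ : L →ₗ[K] K)
    (h : ∀ a : L, LieAlgebra.ad K L (P a) = (LieAlgebra.ad K L a) ^ p) :
    ∀ v : L × K,
      LieAlgebra.ad K (L × K) ((P v.1, χ v.1 ^ p + v.2 ^ p) : L × K)
        = (LieAlgebra.ad K (L × K) v) ^ p := by
  intro v
  have key : ∀ n : ℕ, 1 ≤ n → ∀ w : L × K,
      ((LieAlgebra.ad K (L × K) v) ^ n) w = (((LieAlgebra.ad K L v.1) ^ n) w.1, 0) := by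
    intro n hn
    induction n with
    | zero => omega
    | succ m ih =>
      intro w
      rcases Nat.eq_or_lt_of_le hn with h1 | h1
      · simp [← h1, LieAlgebra.ad_apply]
        rfl
      · have hm : 1 ≤ m := Nat.lt_succ_iff.mp h1
        rw [pow_succ', pow_succ']
        simp only [Module.End.mul_apply]
        rw [ih hm]
        show (⁅v.1, _⁆, (0:K)) = _
        simp
  apply LinearMap.ext
  intro w
  rw [key p (Nat.one_le_iff_ne_zero.mpr (NeZero.ne p))]
  have hfst : ⁅P v.1, w.1⁆ = ((LieAlgebra.ad K L v.1) ^ p) w.1 := by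
    have := congrFun (congrArg DFunLike.coe (h v.1)) w.1
    simpa using this
  show (⁅P v.1, w.1⁆, (0:K)) = _
  rw [hfst]
end

section
/- For every commutative K-algebra R and every ring homomorphism h : A → R, there exist a commutative R-algebra R̃ with structure homomorphism φ : R → R̃ which is faithfully flat and of finite presentation over R, and a ring homomorphism y : A → R̃, such that y(a)^p = φ(h(a)) for every a ∈ A. (That is, fppf-locally on R, every R-point of A lifts along the Frobenius a ↦ a^p.) -/
/-!
Adjoin to `R` the `p`-th roots of the images of finitely many `K`-algebra generators `xᵢ` of `A`;
this is an fppf cover `R → R̃`. Make `R̃` a `K`-algebra through `h` twisted by the inverse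
Frobenius of the perfect field `K`; then `xᵢ ↦ (p-th root of h xᵢ)` is a `K`-algebra map `Θ` from
the polynomial ring, with `Θ(x)^p = h(f x)`. Hence `Θ` sends the relations of `A` into an ideal
`J` of `R̃` whose elements have vanishing `p`-th powers; as `J` is finitely generated it is
nilpotent, and formal smoothness lifts the induced map `A → R̃ ⧸ J` to `y : A → R̃`.
Since `u ↦ u^p` is additive and kills `J`, `y(f x)^p = Θ(x)^p = h(f x)`.
-/

universe u

open Polynomial

section AdjoinPowRoot

variable {R : Type u} [CommRing R] {n : ℕ}

lemma AdjoinRoot.root_X_pow_sub_C_pow (c : R) :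
    AdjoinRoot.root (X ^ n - C c) ^ n = algebraMap R (AdjoinRoot (X ^ n - C c)) c := by
  have := AdjoinRoot.mk_self (f := X ^ n - C c)
  rwa [map_sub, map_pow, AdjoinRoot.mk_X, AdjoinRoot.mk_C, sub_eq_zero] at this

lemma AdjoinRoot.faithfullyFlat_X_pow_sub_C (hn : n ≠ 0) (c : R) :
    Module.FaithfullyFlat R (AdjoinRoot (X ^ n - C c)) := by
  have hq := monic_X_pow_sub_C c hn
  have := hq.free_adjoinRoot
  rcases subsingleton_or_nontrivial R with _ | _
  · exact ⟨fun m hm ↦ absurd (Subsingleton.elim m ⊤) hm.ne_top⟩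
  · have : Nontrivial (AdjoinRoot (X ^ n - C c)) := Ideal.Quotient.nontrivial_iff.mpr <| by
      rw [Ne, Ideal.span_singleton_eq_top, hq.isUnit_iff]
      exact fun h ↦ hn (by simpa [h] using (natDegree_X_pow_sub_C (n := n) (r := c)).symm)
    infer_instance

theorem exists_faithfullyFlat_finitePresentation_forall_pow_eq (hn : n ≠ 0) (s : Finset R) :
    ∃ (S : Type u) (_ : CommRing S) (_ : Algebra R S),
      Module.FaithfullyFlat R S ∧ Algebra.FinitePresentation R S ∧
      ∀ c ∈ s, ∃ r : S, r ^ n = algebraMap R S c := by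
  classical
  induction s using Finset.induction_on with
  | empty => exact ⟨R, _, _, inferInstance, inferInstance, by simp⟩
  | insert c s _ ih =>
    obtain ⟨S, _, _, _, _, hS⟩ := ih
    let T := AdjoinRoot (X ^ n - C (algebraMap R S c))
    have := AdjoinRoot.faithfullyFlat_X_pow_sub_C hn (algebraMap R S c)
    refine ⟨T, _, _, .trans R S T, .trans R S T, ?_⟩
    simp only [Finset.mem_insert, forall_eq_or_imp]
    refine ⟨⟨_, (AdjoinRoot.root_X_pow_sub_C_pow _).trans ?_⟩, fun d hd ↦ ?_⟩
    · exact (IsScalarTower.algebraMap_apply R S T c).symm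
    · obtain ⟨r, hr⟩ := hS d hd
      exact ⟨algebraMap S T r, by rw [← map_pow, hr, ← IsScalarTower.algebraMap_apply]⟩

end AdjoinPowRoot

section FrobeniusLift

variable {R P A S : Type*} [CommRing R] [CommRing P] [Algebra R P] [CommRing A] [Algebra R A]
  [CommRing S] [Algebra R S] (p : ℕ) [ExpChar S p]

theorem Ideal.pow_eq_pow_of_sub_mem {J : Ideal S} (hJ : ∀ u ∈ J, u ^ p = 0) {x y : S}
    (hxy : x - y ∈ J) : x ^ p = y ^ p := by
  rw [← sub_eq_zero, ← sub_pow_expChar, hJ _ hxy]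

theorem Algebra.FormallySmooth.exists_algHom_pow_eq [Algebra.FormallySmooth R A]
    (f : P →ₐ[R] A) (hf : Function.Surjective f) (hker : (RingHom.ker f).FG)
    (Θ : P →ₐ[R] S) (g : A →+* S) (hΘ : ∀ x, Θ x ^ p = g (f x)) :
    ∃ y : A →ₐ[R] S, ∀ a, y a ^ p = g a := by
  set J : Ideal S := (RingHom.ker f).map Θ
  have hJ : ∀ u ∈ J, u ^ p = 0 := by
    suffices J ≤ RingHom.ker (frobenius S p) from fun u hu ↦ this hu
    refine Ideal.map_le_iff_le_comap.mpr fun x hx ↦ ?_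
    rw [Ideal.mem_comap, RingHom.mem_ker, frobenius_def, hΘ, RingHom.mem_ker.mp hx, map_zero]
  have hJnil : IsNilpotent J :=
    (hker.map _).isNilpotent_iff_le_nilradical.mpr fun u hu ↦ ⟨p, hJ u hu⟩
  have hΘJ : RingHom.ker f.toRingHom ≤ RingHom.ker ((Ideal.Quotient.mkₐ R J).comp Θ).toRingHom :=
    fun x hx ↦ Ideal.Quotient.eq_zero_iff_mem.mpr (Ideal.mem_map_of_mem _ hx)
  obtain ⟨y, hy⟩ := Algebra.FormallySmooth.exists_lift J hJnil
    (f.liftOfSurjective hf ((Ideal.Quotient.mkₐ R J).comp Θ) hΘJ)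
  refine ⟨y, fun a ↦ ?_⟩
  obtain ⟨x, rfl⟩ := hf a
  rw [← hΘ]
  refine Ideal.pow_eq_pow_of_sub_mem p hJ (Ideal.Quotient.eq.mp ?_)
  simpa using AlgHom.congr_fun hy (f x)

end FrobeniusLift

theorem exists_ringHom_pow_eq_of_adjoin_eq_top {K A S : Type*} [Field K] (p : ℕ) [ExpChar K p]
    [PerfectRing K p] [CommRing A] [Algebra K A] [Algebra.Smooth K A] [CommRing S]
    (g : A →+* S) (s : Finset A) (hs : Algebra.adjoin K (s : Set A) = ⊤)
    (hroot : ∀ a ∈ s, ∃ r : S, r ^ p = g a) : ∃ y : A →+* S, ∀ a, y a ^ p = g a := by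
  rcases subsingleton_or_nontrivial S with _ | _
  · exact ⟨g, fun _ ↦ Subsingleton.elim _ _⟩
  -- Twisting by the inverse Frobenius of `K` turns the chosen roots into a `K`-algebra map.
  let _ : Algebra K S :=
    (g.comp ((algebraMap K A).comp (frobeniusEquiv K p).symm.toRingHom)).toAlgebra
  have : ExpChar S p := expChar_of_injective_ringHom (algebraMap K S).injective p
  choose t ht using hroot
  let f : MvPolynomial s K →ₐ[K] A := MvPolynomial.aeval Subtype.val
  have hf : Function.Surjective f := by
    rw [← AlgHom.range_eq_top, MvPolynomial.aeval_range, Subtype.range_coe, hs]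
  let Θ : MvPolynomial s K →ₐ[K] S := MvPolynomial.aeval fun a ↦ t a a.2
  have hΘ : (frobenius S p).comp Θ.toRingHom = g.comp f.toRingHom := by
    refine MvPolynomial.ringHom_ext (fun c ↦ ?_) (fun a ↦ ?_)
    · simp [frobenius_def, RingHom.algebraMap_toAlgebra, ← map_pow, frobeniusEquiv_symm_pow]
    · simp [frobenius_def, f, Θ, ht]
  obtain ⟨y, hy⟩ := Algebra.FormallySmooth.exists_algHom_pow_eq p f hf
    (Algebra.FinitePresentation.ker_fG_of_surjective f hf) Θ g (RingHom.congr_fun hΘ)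
  exact ⟨y, hy⟩

theorem stmt_14_general {K A : Type u} [Field K] [IsAlgClosed K]
    (p : ℕ) [CharP K p] [NeZero p]
    [CommRing A] [Algebra K A] [Algebra.Smooth K A]
    (R : Type u) [CommRing R] (h : A →+* R) :
    ∃ (Rt : Type u) (_ : CommRing Rt) (_ : Algebra R Rt),
      Module.FaithfullyFlat R Rt ∧ Algebra.FinitePresentation R Rt ∧
      ∃ y : A →+* Rt, ∀ a : A, y a ^ p = algebraMap R Rt (h a) := by
  classical
  have := CharP.char_is_prime_of_pos K p
  obtain ⟨s, hs⟩ := Algebra.FiniteType.out (R := K) (A := A)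
  obtain ⟨Rt, _, _, hff, hfp, hroot⟩ :=
    exists_faithfullyFlat_finitePresentation_forall_pow_eq (NeZero.ne p) (s.image h)
  obtain ⟨y, hy⟩ := exists_ringHom_pow_eq_of_adjoin_eq_top p ((algebraMap R Rt).comp h) s hs
    fun a ha ↦ hroot (h a) (Finset.mem_image_of_mem h ha)
  exact ⟨Rt, _, _, hff, hfp, y, hy⟩

/-- Let `K` be an algebraically closed field of characteristic
`p > 0` and `A` a smooth commutative `K`-algebra.  For every commutative
`K`-algebra `R` and every ring homomorphism `h : A → R`, there exist a
commutative `R`-algebra `R̃` which is faithfully flat and of finite presentation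
over `R`, and a ring homomorphism `y : A → R̃`, such that `y(a)^p = φ(h(a))` for
all `a ∈ A`, where `φ : R → R̃` is the structure map.  (Fppf-locally on `R`,
every `R`-point of `A` lifts along the Frobenius `a ↦ a^p`.) -/
theorem stmt_14 {K A : Type u} [Field K] [IsAlgClosed K]
    (p : ℕ) [CharP K p] [NeZero p]
    [CommRing A] [Algebra K A] [Algebra.Smooth K A]
    (R : Type u) [CommRing R] [Algebra K R] (h : A →+* R) :
    ∃ (Rt : Type u) (_ : CommRing Rt) (_ : Algebra R Rt),
      Module.FaithfullyFlat R Rt ∧ Algebra.FinitePresentation R Rt ∧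
      ∃ y : A →+* Rt, ∀ a : A, y a ^ p = algebraMap R Rt (h a) :=
  stmt_14_general (K := K) p R h
end

section
/- Let x, z ∈ L be elements such that [z, y] = (ad x)^p (y) for all y ∈ L, where ad x = [x, ·] and the p-th power is composition of K-linear endomorphisms. Then the element ι(x)^p − ι(z) of the universal enveloping algebra U(L) is central: it commutes with every element of U(L). -/
/-!
In an associative algebra `ad a = L_a - R_a` with `L_a`, `R_a` commuting, so in characteristic `p`
the freshman's dream gives `(ad a)^p = ad (a^p)`. Since `ι` intertwines the adjoint actions,
`ad (ι x ^ p)` and `ad (ι z)` agree on every `ι y`; thus `ι x ^ p - ι z` commutes with the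
generators of `U(L)`, hence with all of it.
-/

open LieAlgebra UniversalEnvelopingAlgebra

attribute [local instance] LieRing.ofAssociativeRing

theorem LieHom.map_ad_pow_apply {R L L' : Type*} [CommRing R] [LieRing L] [LieAlgebra R L]
    [LieRing L'] [LieAlgebra R L'] (f : L →ₗ⁅R⁆ L') (x y : L) (n : ℕ) :
    f ((ad R L x ^ n) y) = (ad R L' (f x) ^ n) (f y) := by
  have : Function.Semiconj f (ad R L x) (ad R L' (f x)) := fun y ↦ f.map_lie x y
  simpa only [Module.End.coe_pow] using this.iterate_right n y

theorem LieAlgebra.ad_pow_char {K A : Type*} [Field K] [Ring A] [Algebra K A] (p : ℕ)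
    [CharP K p] [Fact p.Prime] (a : A) : ad K A a ^ p = ad K A (a ^ p) := by
  nontriviality A
  have : CharP (Module.End K A) p := charP_of_injective_algebraMap' K p
  rw [ad_eq_lmul_left_sub_lmul_right, Pi.sub_apply, Pi.sub_apply,
    sub_pow_char_of_commute _ (LinearMap.commute_mulLeft_right a a), LinearMap.pow_mulLeft,
    LinearMap.pow_mulRight]

namespace UniversalEnvelopingAlgebra

variable {R L : Type*} [CommRing R] [LieRing L] [LieAlgebra R L]

theorem commute_of_forall_commute_ι {c : UniversalEnvelopingAlgebra R L}
    (h : ∀ y : L, Commute c (ι R y)) (u : UniversalEnvelopingAlgebra R L) : Commute c u := by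
  obtain ⟨t, rfl⟩ : ∃ t, mkAlgHom R L t = u := RingCon.mkₐ_surjective (α := R) _ u
  induction t using TensorAlgebra.induction with
  | algebraMap r => rw [AlgHom.commutes]; exact Algebra.commute_algebraMap_right r c
  | ι y => exact h y
  | mul s t hs ht => rw [map_mul]; exact hs.mul_right ht
  | add s t hs ht => rw [map_add]; exact hs.add_right ht

end UniversalEnvelopingAlgebra

/-- Let `K` be a field of characteristic `p > 0`, `L` a Lie
algebra over `K`, and `x z : L` such that `⁅z, y⁆ = (ad x)^p y` for all `y ∈ L`.
Then the element `ι(x)^p - ι(z)` of the universal enveloping algebra `U(L)` is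
central: it commutes with every element of `U(L)`. -/
theorem stmt_15 {K L : Type*} (p : ℕ) [Field K] [CharP K p] [NeZero p]
    [LieRing L] [LieAlgebra K L] (x z : L)
    (h : ∀ y : L, ⁅z, y⁆ = ((LieAlgebra.ad K L x) ^ p) y) :
    ∀ u : UniversalEnvelopingAlgebra K L,
      (UniversalEnvelopingAlgebra.ι K x ^ p - UniversalEnvelopingAlgebra.ι K z) * u
        = u * (UniversalEnvelopingAlgebra.ι K x ^ p - UniversalEnvelopingAlgebra.ι K z) := by
  have : Fact p.Prime := CharP.char_is_prime_of_pos K p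
  refine commute_of_forall_commute_ι fun y ↦ ?_
  rw [commute_iff_lie_eq, sub_lie, sub_eq_zero]
  calc ⁅ι K x ^ p, ι K y⁆ = (ad K _ (ι K x) ^ p) (ι K y) := by rw [ad_pow_char, ad_apply]
    _ = ι K ((ad K L x ^ p) y) := (LieHom.map_ad_pow_apply _ x y p).symm
    _ = ⁅ι K z, ι K y⁆ := by rw [← h, LieHom.map_lie]
end
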